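/- Termwise pentagon identity: for all integers $m, n$, $\frac{q^{mn}}{(q)_m (q)_n} = \sum_{s} \frac{(-1)^s q^{\frac12 s^2 - \frac12 s}}{(q)_{m-s} (q)_{n-s} (q)_s}$, where the sum is over integers $s$ with $0 \leq s \leq \min(m,n)$. -/
import Mathlib


/- Identity in the field of rational functions `ℚ(q)`, with the convention
`1/(q)_n = 0` for `n < 0`. -/

/-- `1/(q)_n` in `ℚ(q)`, with `(q)_n = ∏_{i=1}^n (1-q^i)` and the convention
`1/(q)_n = 0` for `n < 0`. -/
noncomputable def qPochInv (n : ℤ) : RatFunc ℚ :=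
  if 0 ≤ n then
    (∏ i ∈ Finset.range n.toNat, (1 - (RatFunc.X : RatFunc ℚ) ^ (i + 1)))⁻¹
  else 0

lemma qPochInv_neg {n : ℤ} (h : n < 0) : qPochInv n = 0 := by
  simp [qPochInv, not_le.2 h]

lemma qPochInv_zero : qPochInv 0 = 1 := by simp [qPochInv]

lemma qPochInv_natCast (k : ℕ) : qPochInv (k : ℤ) =
    (∏ i ∈ Finset.range k, (1 - (RatFunc.X : RatFunc ℚ) ^ (i + 1)))⁻¹ := by
  simp [qPochInv]

lemma one_sub_X_pow_ne_zero (k : ℕ) (hk : k ≠ 0) :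
    (1 - (RatFunc.X : RatFunc ℚ) ^ k) ≠ 0 := by
  have h : algebraMap (Polynomial ℚ) (RatFunc ℚ) (1 - Polynomial.X ^ k)
      = 1 - RatFunc.X ^ k := by
    simp [map_sub, map_pow, RatFunc.algebraMap_X]
  rw [← h]
  apply RatFunc.algebraMap_ne_zero
  intro h2
  have := congrArg (fun p => Polynomial.coeff p k) h2
  simp [Polynomial.coeff_one, hk] at this

lemma qPochInv_succ (k : ℕ) :
    qPochInv (k : ℤ) = (1 - (RatFunc.X : RatFunc ℚ) ^ (k + 1)) * qPochInv ((k : ℤ) + 1) := by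
  have h1 : ((k : ℤ) + 1) = ((k + 1 : ℕ) : ℤ) := by push_cast; ring
  rw [h1, qPochInv_natCast, qPochInv_natCast, Finset.prod_range_succ, mul_inv,
    mul_comm ((∏ i ∈ Finset.range k, (1 - (RatFunc.X : RatFunc ℚ) ^ (i + 1)))⁻¹),
    ← mul_assoc, mul_inv_cancel₀ (one_sub_X_pow_ne_zero (k+1) (Nat.succ_ne_zero k)), one_mul]

lemma pascal (k s : ℕ) (hs : s ≤ k + 1) :
    (1 - (RatFunc.X : RatFunc ℚ) ^ (k + 1)) * (qPochInv ((k : ℤ) + 1 - s) * qPochInv s)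
      = qPochInv ((k : ℤ) - s) * qPochInv s
        + (RatFunc.X : RatFunc ℚ) ^ (k + 1 - s) * qPochInv ((k : ℤ) + 1 - s) *
            qPochInv ((s : ℤ) - 1) := by
  rcases s with _ | t
  · simp only [Nat.cast_zero, sub_zero, Nat.sub_zero, qPochInv_zero, zero_sub]
    rw [qPochInv_neg (show (-1:ℤ) < 0 by norm_num), qPochInv_succ k]
    ring
  · have hC : qPochInv ((t + 1 : ℕ) : ℤ) * (1 - (RatFunc.X : RatFunc ℚ) ^ (t + 1)) =
        qPochInv (((t + 1 : ℕ) : ℤ) - 1) := by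
      rw [show (((t + 1 : ℕ) : ℤ) - 1) = (t : ℤ) by push_cast; ring, qPochInv_succ t,
        show ((t : ℤ) + 1) = ((t + 1 : ℕ) : ℤ) by push_cast; ring]
      ring
    rcases Nat.lt_or_ge k (t + 1) with hk | hk
    · -- s = k + 1
      obtain rfl : k = t := by omega
      rw [show ((k : ℤ) + 1 - ((k+1 : ℕ) : ℤ)) = 0 by push_cast; omega,
        show ((k : ℤ) - ((k+1 : ℕ) : ℤ)) = -1 by push_cast; omega,
        show (k + 1 - (k+1)) = 0 by omega,
        qPochInv_neg (by norm_num : (-1:ℤ) < 0), qPochInv_zero, ← hC]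
      push_cast
      ring
    · -- s ≤ k, let u = k - s
      obtain ⟨u, rfl⟩ : ∃ u, k = u + (t + 1) := ⟨k - (t+1), by omega⟩
      have hA : qPochInv (((u + (t+1) : ℕ) : ℤ) - ((t+1 : ℕ) : ℤ)) =
          (1 - (RatFunc.X : RatFunc ℚ) ^ (u + 1)) *
            qPochInv (((u + (t+1) : ℕ) : ℤ) + 1 - ((t+1 : ℕ) : ℤ)) := by
        rw [show (((u + (t+1) : ℕ) : ℤ) - ((t+1 : ℕ) : ℤ)) = (u : ℤ) by push_cast; ring,
          show (((u + (t+1) : ℕ) : ℤ) + 1 - ((t+1 : ℕ) : ℤ)) = (u : ℤ) + 1 by push_cast; ring]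
        exact qPochInv_succ u
      rw [hA, show (u + (t+1) + 1 - (t+1)) = u + 1 by omega, ← hC,
        show (u + (t+1) + 1) = (u + 1) + (t + 1) by omega, pow_add]
      ring

lemma key (a : ℕ) : ∀ n : ℤ,
    (∑ s ∈ Finset.range (a + 1),
      (-1) ^ s * (RatFunc.X : RatFunc ℚ) ^ (s * (s - 1) / 2) *
        qPochInv ((a : ℤ) - s) * qPochInv (n - s) * qPochInv s)
    = (RatFunc.X : RatFunc ℚ) ^ ((a : ℤ) * n) * qPochInv a * qPochInv n := by
  induction a with
  | zero =>
    intro n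
    simp [qPochInv_zero]
  | succ k ih =>
    intro n
    rcases lt_or_ge n 0 with hn | hn
    · rw [Finset.sum_eq_zero, qPochInv_neg hn, mul_zero]
      intro s hs
      rw [qPochInv_neg (show n - (s : ℤ) < 0 by
        have : (0:ℤ) ≤ (s:ℤ) := Int.natCast_nonneg s; omega)]
      ring
    · apply mul_left_cancel₀ (one_sub_X_pow_ne_zero (k+1) (Nat.succ_ne_zero k))
      have hterm : ∀ s ∈ Finset.range (k + 1 + 1),
          (1 - (RatFunc.X : RatFunc ℚ) ^ (k + 1)) *
            ((-1) ^ s * (RatFunc.X : RatFunc ℚ) ^ (s * (s - 1) / 2) *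
              qPochInv (((k+1 : ℕ) : ℤ) - s) * qPochInv (n - s) * qPochInv s)
          = ((-1) ^ s * (RatFunc.X : RatFunc ℚ) ^ (s * (s - 1) / 2) *
              qPochInv ((k : ℤ) - s) * qPochInv (n - s) * qPochInv s)
            + ((-1) ^ s * (RatFunc.X : RatFunc ℚ) ^ (s * (s - 1) / 2) *
                (RatFunc.X : RatFunc ℚ) ^ (k + 1 - s) *
                qPochInv (((k+1 : ℕ) : ℤ) - s) * qPochInv (n - s) * qPochInv ((s : ℤ) - 1)) := by
        intro s hs
        have hp := pascal k s (Finset.mem_range_succ_iff.mp hs)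
        rw [show ((k : ℤ) + 1 - (s:ℤ)) = (((k+1 : ℕ) : ℤ) - s) by push_cast; ring] at hp
        linear_combination ((-1) ^ s * (RatFunc.X : RatFunc ℚ) ^ (s * (s - 1) / 2) *
          qPochInv (n - s)) * hp
      rw [Finset.mul_sum, Finset.sum_congr rfl hterm, Finset.sum_add_distrib]
      -- first sum
      have hS1 : (∑ s ∈ Finset.range (k + 1 + 1),
          (-1) ^ s * (RatFunc.X : RatFunc ℚ) ^ (s * (s - 1) / 2) *
            qPochInv ((k : ℤ) - s) * qPochInv (n - s) * qPochInv s)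
          = (RatFunc.X : RatFunc ℚ) ^ ((k : ℤ) * n) * qPochInv k * qPochInv n := by
        rw [Finset.sum_range_succ,
          qPochInv_neg (show (k : ℤ) - ((k+1 : ℕ) : ℤ) < 0 by push_cast; omega)]
        rw [show ∀ x : RatFunc ℚ, x * 0 * qPochInv (n - ((k+1:ℕ):ℤ)) * qPochInv ((k+1:ℕ):ℤ) = 0
          from fun x => by ring]
        rw [add_zero, ih n]
      -- second sum
      have hS2 : (∑ s ∈ Finset.range (k + 1 + 1),
          (-1) ^ s * (RatFunc.X : RatFunc ℚ) ^ (s * (s - 1) / 2) *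
            (RatFunc.X : RatFunc ℚ) ^ (k + 1 - s) *
            qPochInv (((k+1 : ℕ) : ℤ) - s) * qPochInv (n - s) * qPochInv ((s : ℤ) - 1))
          = -((RatFunc.X : RatFunc ℚ) ^ k *
              ((RatFunc.X : RatFunc ℚ) ^ ((k : ℤ) * (n - 1)) * qPochInv k * qPochInv (n - 1))) := by
        rw [Finset.sum_range_succ']
        rw [show qPochInv (((0:ℕ) : ℤ) - 1) = 0 from qPochInv_neg (by norm_num)]
        rw [mul_zero, add_zero]
        have hterm2 : ∀ t ∈ Finset.range (k + 1),
            ((-1) ^ (t+1) * (RatFunc.X : RatFunc ℚ) ^ ((t+1) * ((t+1) - 1) / 2) *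
              (RatFunc.X : RatFunc ℚ) ^ (k + 1 - (t+1)) *
              qPochInv (((k+1 : ℕ) : ℤ) - (t+1:ℕ)) * qPochInv (n - ((t+1:ℕ):ℤ)) *
              qPochInv (((t+1:ℕ) : ℤ) - 1))
            = (-(RatFunc.X : RatFunc ℚ) ^ k) *
                ((-1) ^ t * (RatFunc.X : RatFunc ℚ) ^ (t * (t - 1) / 2) *
                  qPochInv ((k : ℤ) - t) * qPochInv ((n - 1) - t) * qPochInv t) := by
          intro t ht
          have htk : t ≤ k := by
            have := Finset.mem_range.mp ht; omega
          have e : (RatFunc.X : RatFunc ℚ) ^ ((t+1) * ((t+1) - 1) / 2) *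
              (RatFunc.X : RatFunc ℚ) ^ (k + 1 - (t+1))
              = (RatFunc.X : RatFunc ℚ) ^ (t * (t - 1) / 2) * (RatFunc.X : RatFunc ℚ) ^ k := by
            rw [← pow_add, ← pow_add]
            congr 1
            have h2 : (t+1) * ((t+1) - 1) = t * (t - 1) + t * 2 := by
              rcases t with _ | u
              · simp
              · simp only [Nat.add_sub_cancel]
                ring
            rw [h2, Nat.add_mul_div_right _ _ (by norm_num : 0 < 2)]
            omega
          rw [show (((k+1 : ℕ) : ℤ) - ((t+1:ℕ):ℤ)) = (k : ℤ) - t by push_cast; ring,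
            show (n - ((t+1:ℕ):ℤ)) = (n - 1) - t by push_cast; ring,
            show ((((t+1):ℕ) : ℤ) - 1) = (t : ℤ) by push_cast; ring]
          linear_combination ((-1) ^ (t+1) * qPochInv ((k : ℤ) - t) *
            qPochInv ((n - 1) - t) * qPochInv (t : ℤ)) * e
        rw [Finset.sum_congr rfl hterm2, ← Finset.mul_sum, ih (n - 1)]
        ring
      rw [hS1, hS2]
      rcases hn.eq_or_lt with h0 | hpos
      · subst h0
        rw [qPochInv_zero, qPochInv_succ k,
          show ((0:ℤ) - 1) = -1 by ring, qPochInv_neg (show (-1:ℤ) < 0 by norm_num),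
          show (((k+1:ℕ)) : ℤ) = (k : ℤ) + 1 by push_cast; ring]
        simp only [mul_zero, zero_mul, zpow_zero]
        ring
      · obtain ⟨j, rfl⟩ : ∃ j : ℕ, n = (j : ℤ) + 1 := ⟨n.toNat - 1, by omega⟩
        rw [show ((j:ℤ) + 1 - 1) = (j : ℤ) by ring, qPochInv_succ j, qPochInv_succ k,
          show (((k+1:ℕ)) : ℤ) = (k : ℤ) + 1 by push_cast; ring,
          show ((k:ℤ) * ((j:ℤ) + 1)) = ((k * (j+1) : ℕ) : ℤ) by push_cast; ring,
          show ((k:ℤ) * (j:ℤ)) = ((k * j : ℕ) : ℤ) by push_cast; ring,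
          show (((k:ℤ) + 1) * ((j:ℤ) + 1)) = (((k+1) * (j+1) : ℕ) : ℤ) by push_cast; ring,
          zpow_natCast, zpow_natCast, zpow_natCast,
          show k * (j+1) = k + k * j by ring,
          show (k+1) * (j+1) = (k + k * j) + (j + 1) by ring,
          pow_add, pow_add]
        ring

lemma toNat_tri (s : ℕ) : ((((s:ℤ)) ^ 2 - (s:ℤ)) / 2).toNat = s * (s - 1) / 2 := by
  rcases s with _ | t
  · simp
  · rw [show (((t+1:ℕ):ℤ)) ^ 2 - ((t+1:ℕ):ℤ) = (((t+1) * t : ℕ) : ℤ) by push_cast; ring,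
      show (2:ℤ) = ((2:ℕ):ℤ) from rfl, ← Int.natCast_div, Int.toNat_natCast]
    simp


/-- Termwise pentagon identity: for all integers `m, n`,
`q^{mn}/((q)_m (q)_n) = ∑_{0 ≤ s ≤ min(m,n)} (-1)^s q^{s²/2 - s/2} /
((q)_{m-s} (q)_{n-s} (q)_s)`. -/
theorem termwise_pentagon (m n : ℤ) :
    (RatFunc.X : RatFunc ℚ) ^ (m * n) * qPochInv m * qPochInv n =
      ∑ s ∈ Finset.Icc (0 : ℤ) (min m n),
        (-1) ^ s.toNat * (RatFunc.X : RatFunc ℚ) ^ (((s ^ 2 - s) / 2).toNat) *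
          qPochInv (m - s) * qPochInv (n - s) * qPochInv s := by
  rcases lt_or_ge m 0 with hm | hm
  · rw [Finset.Icc_eq_empty (by omega), Finset.sum_empty, qPochInv_neg hm, mul_zero, zero_mul]
  rcases lt_or_ge n 0 with hn | hn
  · rw [Finset.Icc_eq_empty (by omega), Finset.sum_empty, qPochInv_neg hn, mul_zero]
  obtain ⟨a, rfl⟩ : ∃ a : ℕ, m = (a : ℤ) := ⟨m.toNat, by omega⟩
  have h1 : (∑ s ∈ Finset.Icc (0 : ℤ) (min (a:ℤ) n),
        (-1) ^ s.toNat * (RatFunc.X : RatFunc ℚ) ^ (((s ^ 2 - s) / 2).toNat) *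
          qPochInv ((a:ℤ) - s) * qPochInv (n - s) * qPochInv s)
      = ∑ s ∈ Finset.Icc (0 : ℤ) (a : ℤ),
        (-1) ^ s.toNat * (RatFunc.X : RatFunc ℚ) ^ (((s ^ 2 - s) / 2).toNat) *
          qPochInv ((a:ℤ) - s) * qPochInv (n - s) * qPochInv s :=
    Finset.sum_subset (Finset.Icc_subset_Icc_right (min_le_left _ _)) (by
      intro s hs hns
      have hh1 := Finset.mem_Icc.mp hs
      have hh2 : ¬ (0 ≤ s ∧ s ≤ min (a:ℤ) n) := fun h => hns (Finset.mem_Icc.mpr h)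
      rw [qPochInv_neg (show n - s < 0 by omega)]
      ring)
  have h2 : (∑ s ∈ Finset.Icc (0 : ℤ) (a : ℤ),
        (-1) ^ s.toNat * (RatFunc.X : RatFunc ℚ) ^ (((s ^ 2 - s) / 2).toNat) *
          qPochInv ((a:ℤ) - s) * qPochInv (n - s) * qPochInv s)
      = ∑ s ∈ Finset.range (a + 1),
        (-1) ^ s * (RatFunc.X : RatFunc ℚ) ^ (s * (s - 1) / 2) *
          qPochInv ((a : ℤ) - s) * qPochInv (n - s) * qPochInv s :=
    Finset.sum_nbij' (fun s => s.toNat) (fun s => (s : ℤ))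
      (fun s hs => by
        simp only [Finset.mem_Icc] at hs
        simp only [Finset.mem_range]
        omega)
      (fun s hs => by
        simp only [Finset.mem_range] at hs
        simp only [Finset.mem_Icc]
        omega)
      (fun s hs => by
        simp only [Finset.mem_Icc] at hs
        omega)
      (fun s hs => by
        omega)
      (fun s hs => by
        simp only [Finset.mem_Icc] at hs
        obtain ⟨t, rfl⟩ : ∃ t : ℕ, s = (t : ℤ) := ⟨s.toNat, by omega⟩
        simp only [Int.toNat_natCast, toNat_tri])
  rw [h1, h2]
  exact (key a n).symm
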